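/- arXiv:1802.08439 — 2 statements merged into one kernel-verified Lean document; each statement's English description precedes it below -/
import Mathlib

section
/- Let (X, ℬ, μ, T) be a conservative, measure-preserving transformation of a σ-finite measure space. Let (a_n)_{n≥1} be a sequence of measurable functions that is superadditive with respect to T (i.e. a_{n+m} ≥ a_n + a_m∘Tⁿ μ-a.e. for all n, m ≥ 1), with a_1 ≥ 0 μ-a.e. Let g ∈ L¹(X, μ) with g > 0 μ-a.e. Define h̲ := liminf_{n→∞} a_n / S_n g and h̄ := limsup_{n→∞} a_n / S_n g, with values in [0,+∞]. Then h̲∘T = h̲ μ-almost everywhere and h̄∘T = h̄ μ-almost everywhere. -/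
open MeasureTheory Filter Topology

/-- `T` is conservative w.r.t. `μ`: every set of positive measure returns to itself. -/
def IsConservative {X : Type*} [MeasurableSpace X] (T : X → X) (μ : Measure X) : Prop :=
  ∀ A : Set X, MeasurableSet A → 0 < μ A → ∃ n ≥ 1, 0 < μ (A ∩ (T^[n]) ⁻¹' A)

/-- Birkhoff sum `S_n f = ∑_{k<n} f ∘ T^k`. -/
noncomputable def birkhoff {X : Type*} (T : X → X) (f : X → ℝ) (n : ℕ) (x : X) : ℝ :=
  ∑ k ∈ Finset.range n, f (T^[k] x)


lemma my_ereal_le_coe {x : EReal} {r : ℝ} (h : ∀ ε : ℝ, 0 < ε → x ≤ ((r + ε : ℝ) : EReal)) :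
    x ≤ (r : EReal) := by
  by_contra hc
  push_neg at hc
  obtain ⟨t, hrt, htx⟩ := EReal.exists_between_coe_real hc
  have hrt' : r < t := EReal.coe_lt_coe_iff.mp hrt
  have := h (t - r) (by linarith)
  rw [show r + (t - r) = t by ring] at this
  exact absurd (lt_of_le_of_lt this htx) (lt_irrefl x)

lemma my_ereal_le_of_forall {x y : EReal} (h : ∀ r : ℝ, x < (r : EReal) → y ≤ (r : EReal)) :
    y ≤ x := by
  by_contra hc
  push_neg at hc
  obtain ⟨r, hxr, hry⟩ := EReal.exists_between_coe_real hc
  exact absurd (h r hxr) (not_le.mpr hry)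

lemma my_ptwise_liminf (A B s t : ℕ → ℝ) (c : ℝ)
    (hBA : ∀ n, 1 ≤ n → B n ≤ A (n + 1))
    (hst : ∀ n, s (n + 1) = t n + c)
    (ht : Tendsto t atTop atTop)
    (hspos : ∀ n, 1 ≤ n → 0 < s n) (htpos : ∀ n, 1 ≤ n → 0 < t n) :
    liminf (fun n => ((B n / t n : ℝ) : EReal)) atTop
      ≤ liminf (fun n => ((A n / s n : ℝ) : EReal)) atTop := by
  apply my_ereal_le_of_forall
  intro r hr
  apply my_ereal_le_coe
  intro ε hε
  have hfreq : ∃ᶠ n in atTop, ((A n / s n : ℝ) : EReal) < (r : EReal) :=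
    frequently_lt_of_liminf_lt (by isBoundedDefault) hr
  have hev : ∀ᶠ n : ℕ in atTop, 2 ≤ n ∧ r * c / ε ≤ t (n - 1) := by
    have h1 : ∀ᶠ m : ℕ in atTop, r * c / ε ≤ t m := ht.eventually_ge_atTop _
    have h2 : Tendsto (fun n : ℕ => n - 1) atTop atTop := tendsto_sub_atTop_nat 1
    filter_upwards [eventually_ge_atTop 2, h2.eventually h1] with n hn h1n
    exact ⟨hn, h1n⟩
  have key : ∃ᶠ m in atTop, ((B m / t m : ℝ) : EReal) ≤ ((r + ε : ℝ) : EReal) := by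
    rw [frequently_atTop]
    intro M
    obtain ⟨n, hnM, hAn, hn2, htn⟩ := frequently_atTop.mp (hfreq.and_eventually hev) (M + 2)
    set m := n - 1 with hm
    have hnm : n = m + 1 := by omega
    have hm1 : 1 ≤ m := by omega
    refine ⟨m, by omega, ?_⟩
    have hsn : 0 < s n := hspos n (by omega)
    have htm : 0 < t m := htpos m hm1
    have hAn' : A n / s n < r := EReal.coe_lt_coe_iff.mp hAn
    have hAns : A n < r * s n := (div_lt_iff₀ hsn).mp hAn'
    have hrc : r * c ≤ ε * t m := by
      have := htn
      rw [div_le_iff₀ hε] at this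
      linarith
    have hBm : B m < (r + ε) * t m := by
      have h1 : B m ≤ A n := by rw [hnm]; exact hBA m hm1
      have h2 : s n = t m + c := by rw [hnm]; exact hst m
      have h3 : r * s n = r * t m + r * c := by rw [h2]; ring
      nlinarith
    have : B m / t m ≤ r + ε := le_of_lt ((div_lt_iff₀ htm).mpr hBm)
    exact EReal.coe_le_coe_iff.mpr this
  exact liminf_le_of_frequently_le key

lemma my_ptwise_limsup (A B s t : ℕ → ℝ) (c : ℝ)
    (hBA : ∀ n, 1 ≤ n → B n ≤ A (n + 1))
    (hst : ∀ n, s (n + 1) = t n + c)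
    (ht : Tendsto t atTop atTop)
    (hspos : ∀ n, 1 ≤ n → 0 < s n) (htpos : ∀ n, 1 ≤ n → 0 < t n) :
    limsup (fun n => ((B n / t n : ℝ) : EReal)) atTop
      ≤ limsup (fun n => ((A n / s n : ℝ) : EReal)) atTop := by
  apply my_ereal_le_of_forall
  intro r hr
  apply my_ereal_le_coe
  intro ε hε
  have hevA : ∀ᶠ n in atTop, ((A n / s n : ℝ) : EReal) < (r : EReal) :=
    eventually_lt_of_limsup_lt hr
  have hev : ∀ᶠ n : ℕ in atTop, 2 ≤ n ∧ r * c / ε ≤ t (n - 1) := by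
    have h1 : ∀ᶠ m : ℕ in atTop, r * c / ε ≤ t m := ht.eventually_ge_atTop _
    have h2 : Tendsto (fun n : ℕ => n - 1) atTop atTop := tendsto_sub_atTop_nat 1
    filter_upwards [eventually_ge_atTop 2, h2.eventually h1] with n hn h1n
    exact ⟨hn, h1n⟩
  have key : ∀ᶠ m in atTop, ((B m / t m : ℝ) : EReal) ≤ ((r + ε : ℝ) : EReal) := by
    obtain ⟨N, hN⟩ := eventually_atTop.mp (hevA.and hev)
    rw [eventually_atTop]
    refine ⟨N + 2, fun m hmN => ?_⟩
    obtain ⟨hAn, hn2, htn⟩ := hN (m + 1) (by omega)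
    have hm1 : 1 ≤ m := by omega
    have hmm : (m + 1) - 1 = m := by omega
    rw [hmm] at htn
    have hsn : 0 < s (m + 1) := hspos (m + 1) (by omega)
    have htm : 0 < t m := htpos m hm1
    have hAn' : A (m + 1) / s (m + 1) < r := EReal.coe_lt_coe_iff.mp hAn
    have hAns : A (m + 1) < r * s (m + 1) := (div_lt_iff₀ hsn).mp hAn'
    have hrc : r * c ≤ ε * t m := by
      rw [div_le_iff₀ hε] at htn
      linarith
    have hBm : B m < (r + ε) * t m := by
      have h1 : B m ≤ A (m + 1) := hBA m hm1
      have h2 : s (m + 1) = t m + c := hst m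
      have h3 : r * s (m + 1) = r * t m + r * c := by rw [h2]; ring
      nlinarith
    exact EReal.coe_le_coe_iff.mpr (le_of_lt ((div_lt_iff₀ htm).mpr hBm))
  exact limsup_le_of_le (by isBoundedDefault) key

section MT
variable {X : Type*} [MeasurableSpace X] {μ : Measure X} {T : X → X}

/-- A.e. point of a measurable set returns to it infinitely often. -/
lemma my_ae_frequently_mem (hT : MeasurePreserving T μ μ) (hcons : IsConservative T μ)
    {A : Set X} (hA : MeasurableSet A) :
    ∀ᵐ x ∂μ, x ∈ A → ∃ᶠ n in atTop, T^[n] x ∈ A := by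
  set W : Set X := A \ ⋃ k, T^[k + 1] ⁻¹' A with hWdef
  have hWmeas : MeasurableSet W :=
    hA.diff (MeasurableSet.iUnion fun k => hA.preimage (hT.measurable.iterate (k + 1)))
  have hW0 : μ W = 0 := by
    by_contra h
    obtain ⟨n, hn1, hpos⟩ := hcons W hWmeas (pos_iff_ne_zero.mpr h)
    have hempty : W ∩ T^[n] ⁻¹' W = ∅ := by
      ext x
      simp only [Set.mem_inter_iff, Set.mem_empty_iff_false, iff_false]
      rintro ⟨hxW, hxT⟩
      refine hxW.2 (Set.mem_iUnion.mpr ⟨n - 1, ?_⟩)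
      have : n - 1 + 1 = n := by omega
      rw [Set.mem_preimage, this]
      exact hxT.1
    rw [hempty] at hpos
    simp at hpos
  have hN : μ (⋃ m, T^[m] ⁻¹' W) = 0 :=
    measure_iUnion_null fun m => by
      rw [(hT.iterate m).measure_preimage hWmeas.nullMeasurableSet]; exact hW0
  have hNae : ∀ᵐ x ∂μ, x ∉ ⋃ m, T^[m] ⁻¹' W := measure_eq_zero_iff_ae_notMem.mp hN
  filter_upwards [hNae] with x hx hxA
  rw [frequently_atTop]
  intro N
  induction N with
  | zero => exact ⟨0, le_refl 0, hxA⟩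
  | succ N ih =>
    obtain ⟨n, hnN, hnA⟩ := ih
    have hnW : T^[n] x ∉ W := fun hW => hx (Set.mem_iUnion.mpr ⟨n, hW⟩)
    have : T^[n] x ∈ ⋃ k, T^[k + 1] ⁻¹' A := by
      by_contra hc
      exact hnW ⟨hnA, hc⟩
    obtain ⟨k, hk⟩ := Set.mem_iUnion.mp this
    refine ⟨(k + 1) + n, by omega, ?_⟩
    rw [Function.iterate_add_apply]
    exact hk

/-- Birkhoff sums of a positive measurable function diverge a.e. on a conservative system. -/
lemma my_ae_birkhoff_tendsto (hT : MeasurePreserving T μ μ) (hcons : IsConservative T μ)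
    {g : X → ℝ} (hgm : Measurable g) (hgpos : ∀ᵐ x ∂μ, 0 < g x) :
    ∀ᵐ x ∂μ, Tendsto (fun n => birkhoff T g n x) atTop atTop := by
  have hAj : ∀ j : ℕ, ∀ᵐ x ∂μ, x ∈ {y | 1 / ((j : ℝ) + 1) < g y} →
      ∃ᶠ n in atTop, T^[n] x ∈ {y | 1 / ((j : ℝ) + 1) < g y} := fun j =>
    my_ae_frequently_mem hT hcons (measurableSet_lt measurable_const hgm)
  have horb : ∀ᵐ x ∂μ, ∀ k, 0 < g (T^[k] x) :=
    ae_all_iff.mpr fun k => (hT.iterate k).quasiMeasurePreserving.ae hgpos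
  filter_upwards [horb, ae_all_iff.mpr hAj] with x hx hA
  obtain ⟨j, hj⟩ := exists_nat_one_div_lt (hx 0)
  rw [Function.iterate_zero_apply] at hj
  have hfreq := hA j hj
  by_contra hnot
  have hsum : Summable fun k => g (T^[k] x) :=
    (summable_iff_not_tendsto_nat_atTop_of_nonneg fun k => (hx k).le).mpr
      (by simpa [birkhoff] using hnot)
  have hto0 := hsum.tendsto_atTop_zero
  have hev : ∀ᶠ k in atTop, g (T^[k] x) < 1 / ((j : ℝ) + 1) :=
    hto0.eventually (gt_mem_nhds (by positivity))
  obtain ⟨k, hk1, hk2⟩ := (hfreq.and_eventually hev).exists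
  exact absurd hk1 (not_lt.mpr hk2.le)

/-- On a conservative system, `f ∘ T ≤ f` a.e. implies `f ∘ T = f` a.e. -/
lemma my_ae_eq_of_ae_le (hT : MeasurePreserving T μ μ) (hcons : IsConservative T μ)
    {f : X → EReal} (hf : Measurable f) (hle : ∀ᵐ x ∂μ, f (T x) ≤ f x) :
    ∀ᵐ x ∂μ, f (T x) = f x := by
  have hG : ∀ᵐ x ∂μ, ∀ k, f (T^[k + 1] x) ≤ f (T^[k] x) := by
    refine ae_all_iff.mpr fun k => ?_
    have := (hT.iterate k).quasiMeasurePreserving.ae hle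
    filter_upwards [this] with x hx
    have e : T^[k + 1] x = T (T^[k] x) := Function.iterate_succ_apply' T k x
    rw [e]
    exact hx
  set G : Set X := {x | ∀ k, f (T^[k + 1] x) ≤ f (T^[k] x)} with hGdef
  have hGmeas : MeasurableSet G := by
    have hGeq : G = ⋂ k, {x | f (T^[k + 1] x) ≤ f (T^[k] x)} := by
      ext x; simp [hGdef]
    rw [hGeq]
    exact MeasurableSet.iInter fun k =>
      measurableSet_le (hf.comp (hT.measurable.iterate (k + 1)))
        (hf.comp (hT.measurable.iterate k))
  have hCnull : ∀ q : ℚ,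
      μ ({x | f (T x) ≤ ((q : ℝ) : EReal) ∧ ((q : ℝ) : EReal) < f x} ∩ G) = 0 := by
    intro q
    set C : Set X := {x | f (T x) ≤ ((q : ℝ) : EReal) ∧ ((q : ℝ) : EReal) < f x} ∩ G with hCdef
    have hCmeas : MeasurableSet C := by
      have h1 : MeasurableSet {x | f (T x) ≤ ((q : ℝ) : EReal)} :=
        (hf.comp hT.measurable) measurableSet_Iic
      have h2 : MeasurableSet {x | ((q : ℝ) : EReal) < f x} := hf measurableSet_Ioi
      exact (h1.inter h2).inter hGmeas
    by_contra h
    obtain ⟨n, hn1, hpos⟩ := hcons C hCmeas (pos_iff_ne_zero.mpr h)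
    have hempty : C ∩ T^[n] ⁻¹' C = ∅ := by
      ext x
      simp only [Set.mem_inter_iff, Set.mem_empty_iff_false, iff_false]
      rintro ⟨⟨⟨hfT, _⟩, hxG⟩, hxn⟩
      have hchain : ∀ m, 1 ≤ m → f (T^[m] x) ≤ f (T^[1] x) := by
        intro m hm
        induction m, hm using Nat.le_induction with
        | base => exact le_refl _
        | succ m hm ih => exact le_trans (hxG m) ih
      have h1 : f (T^[n] x) ≤ ((q : ℝ) : EReal) := by
        refine le_trans (hchain n hn1) ?_
        rwa [Function.iterate_one]
      have h2 : ((q : ℝ) : EReal) < f (T^[n] x) := hxn.1.2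
      exact absurd h2 (not_lt.mpr h1)
    rw [hempty] at hpos
    simp at hpos
  have hUnull : ∀ᵐ x ∂μ, x ∉ ⋃ q : ℚ,
      ({x | f (T x) ≤ ((q : ℝ) : EReal) ∧ ((q : ℝ) : EReal) < f x} ∩ G) := by
    exact measure_eq_zero_iff_ae_notMem.mp (measure_iUnion_null hCnull)
  filter_upwards [hG, hUnull] with x hxG hxU
  have h1 : f (T x) ≤ f x := by
    have := hxG 0
    rwa [Function.iterate_one, Function.iterate_zero_apply] at this
  rcases eq_or_lt_of_le h1 with heq | hlt
  · exact heq
  · exfalso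
    obtain ⟨r, h1r, h2r⟩ := EReal.exists_between_coe_real hlt
    obtain ⟨r2, h1r2, h2r2⟩ := EReal.exists_between_coe_real h1r
    obtain ⟨qq, hq1, hq2⟩ := exists_rat_btwn (EReal.coe_lt_coe_iff.mp h2r2)
    refine hxU (Set.mem_iUnion.mpr ⟨qq, ⟨⟨?_, ?_⟩, hxG⟩⟩)
    · exact le_of_lt (lt_trans h1r2 (EReal.coe_lt_coe_iff.mpr hq1))
    · exact lt_trans (EReal.coe_lt_coe_iff.mpr hq2) h2r
end MT

/-- Invariance of the liminf and limsup of `a_n / S_n g` for a superadditive sequence. -/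
theorem liminf_limsup_invariant {X : Type*} [MeasurableSpace X] (μ : Measure X)
    [SigmaFinite μ] (T : X → X) (hT : MeasurePreserving T μ μ) (hcons : IsConservative T μ)
    (a : ℕ → X → ℝ) (hmeas : ∀ n, Measurable (a n))
    (hsuper : ∀ n ≥ 1, ∀ m ≥ 1, ∀ᵐ x ∂μ, a n x + a m (T^[n] x) ≤ a (n + m) x)
    (ha1 : ∀ᵐ x ∂μ, 0 ≤ a 1 x)
    (g : X → ℝ) (hg : Integrable g μ) (hgpos : ∀ᵐ x ∂μ, 0 < g x) :
    (∀ᵐ x ∂μ,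
      liminf (fun n => ((a n (T x) / birkhoff T g n (T x) : ℝ) : EReal)) atTop
        = liminf (fun n => ((a n x / birkhoff T g n x : ℝ) : EReal)) atTop) ∧
    (∀ᵐ x ∂μ,
      limsup (fun n => ((a n (T x) / birkhoff T g n (T x) : ℝ) : EReal)) atTop
        = limsup (fun n => ((a n x / birkhoff T g n x : ℝ) : EReal)) atTop) := by
  have hgae : AEMeasurable g μ := hg.aemeasurable
  set g' : X → ℝ := hgae.mk g with hg'def
  have hg'meas : Measurable g' := hgae.measurable_mk
  have hgg' : g =ᵐ[μ] g' := hgae.ae_eq_mk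
  have hg'pos : ∀ᵐ x ∂μ, 0 < g' x := by
    filter_upwards [hgpos, hgg'] with x hx he
    rw [← he]; exact hx
  have hbmeas : ∀ n, Measurable fun x => birkhoff T g' n x := fun n => by
    simp only [birkhoff]
    exact Finset.measurable_sum _ fun k _ => hg'meas.comp (hT.measurable.iterate k)
  set F : X → EReal :=
    fun x => liminf (fun n => ((a n x / birkhoff T g' n x : ℝ) : EReal)) atTop with hFdef
  set Gq : X → EReal :=
    fun x => limsup (fun n => ((a n x / birkhoff T g' n x : ℝ) : EReal)) atTop with hGqdef
  have hFmeas : Measurable F :=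
    Measurable.liminf fun n => measurable_coe_real_ereal.comp ((hmeas n).div (hbmeas n))
  have hGqmeas : Measurable Gq :=
    Measurable.limsup fun n => measurable_coe_real_ereal.comp ((hmeas n).div (hbmeas n))
  have h1 : ∀ᵐ x ∂μ, ∀ n, 1 ≤ n → a n x + a 1 (T^[n] x) ≤ a (n + 1) x := by
    refine ae_all_iff.mpr fun n => ?_
    rcases Nat.eq_zero_or_pos n with h0 | h0
    · exact Filter.Eventually.of_forall fun x hx => absurd hx (by omega)
    · exact (hsuper n h0 1 le_rfl).mono fun x hx _ => hx
  have h1T : ∀ᵐ x ∂μ, ∀ n, 1 ≤ n → a n (T x) + a 1 (T^[n] (T x)) ≤ a (n + 1) (T x) :=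
    hT.quasiMeasurePreserving.ae h1
  have h2 : ∀ᵐ x ∂μ, ∀ n, 1 ≤ n → a 1 x + a n (T x) ≤ a (n + 1) x := by
    refine ae_all_iff.mpr fun n => ?_
    rcases Nat.eq_zero_or_pos n with h0 | h0
    · exact Filter.Eventually.of_forall fun x hx => absurd hx (by omega)
    · filter_upwards [hsuper 1 le_rfl n h0] with x hx _
      rw [Function.iterate_one] at hx
      rw [Nat.add_comm n 1]
      exact hx
  have h3 : ∀ᵐ x ∂μ, ∀ k, 0 ≤ a 1 (T^[k] x) :=
    ae_all_iff.mpr fun k => (hT.iterate k).quasiMeasurePreserving.ae ha1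
  have h4 : ∀ᵐ x ∂μ, ∀ k, 0 < g' (T^[k] x) :=
    ae_all_iff.mpr fun k => (hT.iterate k).quasiMeasurePreserving.ae hg'pos
  have h5 : ∀ᵐ x ∂μ, Tendsto (fun n => birkhoff T g' n x) atTop atTop :=
    my_ae_birkhoff_tendsto hT hcons hg'meas hg'pos
  have hle : ∀ᵐ x ∂μ, F (T x) ≤ F x ∧ Gq (T x) ≤ Gq x := by
    filter_upwards [h1, h1T, h2, h3, h4, h5] with x H1 H1T H2 H3 H4 H5
    have hAnn : ∀ n, 1 ≤ n → 0 ≤ a n x := by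
      intro n hn
      induction n, hn using Nat.le_induction with
      | base =>
        have := H3 0
        rwa [Function.iterate_zero_apply] at this
      | succ n hn ih =>
        have ha := H1 n hn
        have hb := H3 n
        linarith
    have hBnn : ∀ n, 1 ≤ n → 0 ≤ a n (T x) := by
      intro n hn
      induction n, hn using Nat.le_induction with
      | base =>
        have := H3 1
        rwa [Function.iterate_one] at this
      | succ n hn ih =>
        have ha := H1T n hn
        have hb : 0 ≤ a 1 (T^[n] (T x)) := by
          have := H3 (n + 1)
          rwa [show T^[n + 1] x = T^[n] (T x) from Function.iterate_succ_apply T n x] at this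
        linarith
    have hBA : ∀ n, 1 ≤ n → a n (T x) ≤ a (n + 1) x := by
      intro n hn
      have ha := H2 n hn
      have hb : 0 ≤ a 1 x := hAnn 1 le_rfl
      linarith
    have hst : ∀ n, birkhoff T g' (n + 1) x = birkhoff T g' n (T x) + g' x := by
      intro n
      simp only [birkhoff]
      rw [Finset.sum_range_succ']
      have e : ∀ k : ℕ, g' (T^[k + 1] x) = g' (T^[k] (T x)) := fun k =>
        congrArg g' (Function.iterate_succ_apply T k x)
      simp only [e, Function.iterate_zero_apply]
    have hspos : ∀ n, 1 ≤ n → 0 < birkhoff T g' n x := by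
      intro n hn
      exact Finset.sum_pos (fun k _ => H4 k) (Finset.nonempty_range_iff.mpr (by omega))
    have htpos : ∀ n, 1 ≤ n → 0 < birkhoff T g' n (T x) := by
      intro n hn
      refine Finset.sum_pos (fun k _ => ?_) (Finset.nonempty_range_iff.mpr (by omega))
      have := H4 (k + 1)
      rwa [show T^[k + 1] x = T^[k] (T x) from Function.iterate_succ_apply T k x] at this
    have ht : Tendsto (fun n => birkhoff T g' n (T x)) atTop atTop := by
      have h1' : Tendsto (fun n => birkhoff T g' (n + 1) x) atTop atTop :=
        H5.comp (tendsto_add_atTop_nat 1)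
      have h2' : Tendsto (fun n => birkhoff T g' (n + 1) x + -(g' x)) atTop atTop :=
        tendsto_atTop_add_const_right _ _ h1'
      refine h2'.congr fun n => ?_
      rw [hst n]; ring
    exact ⟨my_ptwise_liminf (fun n => a n x) (fun n => a n (T x))
        (fun n => birkhoff T g' n x) (fun n => birkhoff T g' n (T x)) (g' x)
        hBA hst ht hspos htpos,
      my_ptwise_limsup (fun n => a n x) (fun n => a n (T x))
        (fun n => birkhoff T g' n x) (fun n => birkhoff T g' n (T x)) (g' x)
        hBA hst ht hspos htpos⟩
  have hFeq : ∀ᵐ x ∂μ, F (T x) = F x :=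
    my_ae_eq_of_ae_le hT hcons hFmeas (hle.mono fun x h => h.1)
  have hGeq : ∀ᵐ x ∂μ, Gq (T x) = Gq x :=
    my_ae_eq_of_ae_le hT hcons hGqmeas (hle.mono fun x h => h.2)
  have hE : ∀ᵐ x ∂μ, ∀ k, g (T^[k] x) = g' (T^[k] x) :=
    ae_all_iff.mpr fun k => (hT.iterate k).quasiMeasurePreserving.ae hgg'
  have hEbir : ∀ᵐ x ∂μ, (∀ n, birkhoff T g n x = birkhoff T g' n x) ∧
      (∀ n, birkhoff T g n (T x) = birkhoff T g' n (T x)) := by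
    filter_upwards [hE] with x hEx
    constructor
    · intro n
      exact Finset.sum_congr rfl fun k _ => hEx k
    · intro n
      refine Finset.sum_congr rfl fun k _ => ?_
      rw [show T^[k] (T x) = T^[k + 1] x from (Function.iterate_succ_apply T k x).symm]
      exact hEx (k + 1)
  constructor
  · filter_upwards [hFeq, hEbir] with x hFx hEx
    calc liminf (fun n => ((a n (T x) / birkhoff T g n (T x) : ℝ) : EReal)) atTop
        = F (T x) := by
          simp only [hFdef]
          congr 1
          funext n
          rw [hEx.2 n]
      _ = F x := hFx
      _ = liminf (fun n => ((a n x / birkhoff T g n x : ℝ) : EReal)) atTop := by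
          simp only [hFdef]
          congr 1
          funext n
          rw [hEx.1 n]
  · filter_upwards [hGeq, hEbir] with x hGx hEx
    calc limsup (fun n => ((a n (T x) / birkhoff T g n (T x) : ℝ) : EReal)) atTop
        = Gq (T x) := by
          simp only [hGqdef]
          congr 1
          funext n
          rw [hEx.2 n]
      _ = Gq x := hGx
      _ = limsup (fun n => ((a n x / birkhoff T g n x : ℝ) : EReal)) atTop := by
          simp only [hGqdef]
          congr 1
          funext n
          rw [hEx.1 n]
end

section
/- Let (X, ℬ, μ, T) be a conservative, measure-preserving transformation of a σ-finite measure space, and let f, g ∈ L¹(X, μ) with f > 0 and g > 0 μ-almost everywhere. Then for every measurable T-invariant set A: ∫_A f dμ ≥ ∫_A (limsup_{n→∞} S_n f / S_n g)·g dμ; in particular the function (limsup_{n→∞} S_n f / S_n g)·g belongs to L¹(X, μ). -/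
open MeasureTheory Filter Topology

/-- The nonnegative part of an extended real, as an extended nonnegative real. -/
noncomputable def erealToENNReal (x : EReal) : ENNReal :=
  if x = ⊤ then ⊤ else ENNReal.ofReal x.toReal


/-!
Hopf's maximal ergodic theorem, applied to `(f - c g)·1_B` for an a.e. invariant set `B`, gives
`c ∫_B g ≤ ∫_B f` as soon as every point of `B` has some `n` with `c Sₙg < Sₙf`.
Conservativity makes `Sₙg → ∞` along a.e. orbit, so the terms `f x`, `g x` by which `Sₙ₊₁(x)`
and `Sₙ(T x)` differ wash out: `h = limsup Sₙf / Sₙg` is a.e. invariant, and every set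
`A ∩ {a < h ≤ b}` satisfies the condition with `c = a`. Slicing the range of `h` into intervals
of length `ε` gives `∫_A h g ≤ ∫_A f + ε ∫ g`, and the slices `{a < h}` with `a → ∞` show that
`h < ∞` a.e.
-/

open Set
open scoped ENNReal NNReal

lemma tendsto_sum_range_atTop_of_frequently_le {u : ℕ → ℝ} (hu : ∀ n, 0 ≤ u n) {δ : ℝ}
    (hδ : 0 < δ) (h : ∃ᶠ n in atTop, δ ≤ u n) :
    Tendsto (fun n => ∑ i ∈ Finset.range n, u i) atTop atTop := by
  rw [← not_summable_iff_tendsto_nat_atTop_of_nonneg hu]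
  intro hsum
  obtain ⟨n, hδn, hn⟩ :=
    (h.and_eventually (hsum.tendsto_atTop_zero.eventually (gt_mem_nhds hδ))).exists
  exact (hδn.trans_lt hn).false

lemma ENNReal.limsup_mul_of_tendsto_one {ι : Type*} {F : Filter ι} [NeBot F] {u v : ι → ℝ≥0∞}
    (hv : Tendsto v F (𝓝 1)) : limsup (u * v) F = limsup u F := by
  refine le_antisymm ?_ ?_
  · simpa [hv.limsup_eq] using
      ENNReal.limsup_mul_le' (u := u) (v := v) (f := F) (Or.inr (by simp [hv.limsup_eq]))
        (Or.inr (by simp [hv.limsup_eq]))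
  · simpa [hv.liminf_eq] using ENNReal.le_limsup_mul (u := u) (v := v) (f := F)

lemma limsup_ofReal_add_div_add {a b : ℝ} (ha : 0 ≤ a) (hb : 0 ≤ b) {t s : ℕ → ℝ}
    (ht : ∀ n, 0 ≤ t n) (hs : Tendsto s atTop atTop) :
    limsup (fun n => ENNReal.ofReal ((a + t n) / (b + s n))) atTop
      = limsup (fun n => ENNReal.ofReal (t n / s n)) atTop := by
  have hbs : Tendsto (fun n => b + s n) atTop atTop := tendsto_atTop_add_const_left _ b hs
  have hfactor : Tendsto (fun n => ENNReal.ofReal (s n / (b + s n))) atTop (𝓝 1) := by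
    have : Tendsto (fun n => 1 - b / (b + s n)) atTop (𝓝 1) := by
      simpa using tendsto_const_nhds.sub (tendsto_const_nhds.div_atTop hbs)
    simpa using ENNReal.tendsto_ofReal (this.congr' (by
      filter_upwards [hbs.eventually_gt_atTop 0] with n hn
      field_simp; ring))
  have hrest : Tendsto (fun n => ENNReal.ofReal (a / (b + s n))) atTop (𝓝 0) := by
    simpa using ENNReal.tendsto_ofReal (tendsto_const_nhds.div_atTop hbs)
  have hsplit : (fun n => ENNReal.ofReal ((a + t n) / (b + s n))) =ᶠ[atTop]
      (fun n => ENNReal.ofReal (t n / s n)) * (fun n => ENNReal.ofReal (s n / (b + s n)))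
        + fun n => ENNReal.ofReal (a / (b + s n)) := by
    filter_upwards [hs.eventually_gt_atTop 0] with n hn
    have hbsn : 0 < b + s n := by linarith
    simp only [Pi.add_apply, Pi.mul_apply]
    rw [← ENNReal.ofReal_mul (div_nonneg (ht n) hn.le),
      ← ENNReal.ofReal_add (mul_nonneg (div_nonneg (ht n) hn.le) (div_nonneg hn.le hbsn.le))
        (div_nonneg ha hbsn.le)]
    congr 1
    field_simp
    ring
  rw [limsup_congr hsplit, ENNReal.limsup_add_of_right_tendsto_zero hrest,
    ENNReal.limsup_mul_of_tendsto_one hfactor]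

lemma erealToENNReal_limsup_coe {ι : Type*} {F : Filter ι} [NeBot F] (u : ι → ℝ) :
    erealToENNReal (limsup (fun i => (u i : EReal)) F) = limsup (fun i => ENNReal.ofReal (u i)) F :=
  Monotone.map_limsup_of_continuousAt (fun _ _ => EReal.toENNReal_le_toENNReal) _
    EReal.continuous_toENNReal.continuousAt

section BirkhoffMax

variable {X : Type*} {T : X → X} {φ : X → ℝ}

lemma birkhoffSum_nonneg {M : Type*} [AddCommMonoid M] [PartialOrder M] [IsOrderedAddMonoid M]
    {g : X → M} (hg : 0 ≤ g) (n : ℕ) (x : X) : 0 ≤ birkhoffSum T g n x :=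
  Finset.sum_nonneg fun _ _ => hg _

lemma birkhoffSum_indicator_of_forall_iterate_mem_iff {M : Type*} [AddCommMonoid M] {B : Set X}
    {x : X} (hx : ∀ k, T^[k] x ∈ B ↔ x ∈ B) (g : X → M) (n : ℕ) :
    birkhoffSum T (B.indicator g) n x = B.indicator (birkhoffSum T g n) x := by
  by_cases hxB : x ∈ B <;> simp [birkhoffSum, hx, hxB]

def birkhoffMax (T : X → X) (φ : X → ℝ) (N : ℕ) : X → ℝ :=
  (Finset.range (N + 1)).sup' Finset.nonempty_range_add_one (birkhoffSum T φ)

lemma birkhoffMax_apply (N : ℕ) (x : X) :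
    birkhoffMax T φ N x =
      (Finset.range (N + 1)).sup' Finset.nonempty_range_add_one fun n => birkhoffSum T φ n x :=
  Finset.sup'_apply _ _ _

lemma birkhoffSum_le_birkhoffMax {n N : ℕ} (h : n ≤ N) (x : X) :
    birkhoffSum T φ n x ≤ birkhoffMax T φ N x := by
  rw [birkhoffMax_apply]
  exact Finset.le_sup' (fun n => birkhoffSum T φ n x) (Finset.mem_range_succ_iff.2 h)

lemma birkhoffMax_nonneg (N : ℕ) (x : X) : 0 ≤ birkhoffMax T φ N x := by
  simpa using birkhoffSum_le_birkhoffMax (T := T) (φ := φ) N.zero_le x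

variable (T φ) in
lemma exists_birkhoffMax_eq (N : ℕ) (x : X) :
    ∃ n ≤ N, birkhoffMax T φ N x = birkhoffSum T φ n x := by
  obtain ⟨n, hn, h⟩ :=
    Finset.exists_mem_eq_sup' Finset.nonempty_range_add_one fun n => birkhoffSum T φ n x
  exact ⟨n, Finset.mem_range_succ_iff.1 hn, by rw [birkhoffMax_apply, h]⟩

lemma monotone_birkhoffMax (x : X) : Monotone fun N => birkhoffMax T φ N x := fun M N h => by
  obtain ⟨n, hn, heq⟩ := exists_birkhoffMax_eq T φ M x
  dsimp only
  rw [heq]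
  exact birkhoffSum_le_birkhoffMax (hn.trans h) x

lemma birkhoffMax_le_add_birkhoffMax_apply {N : ℕ} {x : X} (h : 0 < birkhoffMax T φ N x) :
    birkhoffMax T φ N x ≤ φ x + birkhoffMax T φ N (T x) := by
  obtain ⟨_ | n, hn, heq⟩ := exists_birkhoffMax_eq T φ N x
  · simp [heq] at h
  · rw [heq, birkhoffSum_succ']
    gcongr
    exact birkhoffSum_le_birkhoffMax (by omega) (T x)

lemma iUnion_setOf_birkhoffMax_pos :
    ⋃ N, {x | 0 < birkhoffMax T φ N x} = {x | ∃ n, 0 < birkhoffSum T φ n x} := by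
  ext x
  simp only [mem_iUnion]
  constructor
  · rintro ⟨N, hN⟩
    obtain ⟨n, -, heq⟩ := exists_birkhoffMax_eq T φ N x
    exact ⟨n, heq ▸ hN⟩
  · rintro ⟨n, hn⟩
    exact ⟨n, hn.trans_le (birkhoffSum_le_birkhoffMax le_rfl x)⟩

variable [MeasurableSpace X] {μ : Measure X}

lemma measurable_birkhoffSum (hT : Measurable T) (hφ : Measurable φ) (n : ℕ) :
    Measurable (birkhoffSum T φ n) :=
  Finset.measurable_sum _ fun k _ => hφ.comp (hT.iterate k)

lemma integrable_birkhoffSum (hT : MeasurePreserving T μ μ) (hφ : Integrable φ μ) (n : ℕ) :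
    Integrable (birkhoffSum T φ n) μ :=
  integrable_finsetSum _ fun k _ => (hT.iterate k).integrable_comp_of_integrable hφ

lemma measurable_birkhoffMax (hT : Measurable T) (hφ : Measurable φ) (N : ℕ) :
    Measurable (birkhoffMax T φ N) :=
  Finset.measurable_sup' _ fun n _ => measurable_birkhoffSum hT hφ n

lemma integrable_birkhoffMax (hT : MeasurePreserving T μ μ) (hφ : Integrable φ μ) (N : ℕ) :
    Integrable (birkhoffMax T φ N) μ :=
  Finset.sup'_induction (p := fun F : X → ℝ => Integrable F μ) _ _ (fun _ h₁ _ h₂ => h₁.sup h₂)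
    fun n _ => integrable_birkhoffSum hT hφ n

lemma MeasureTheory.MeasurePreserving.setIntegral_birkhoffMax_pos_nonneg
    (hT : MeasurePreserving T μ μ) (hφm : Measurable φ) (hφ : Integrable φ μ) (N : ℕ) :
    0 ≤ ∫ x in {x | 0 < birkhoffMax T φ N x}, φ x ∂μ := by
  set M := birkhoffMax T φ N
  have hMm : Measurable M := measurable_birkhoffMax hT.measurable hφm N
  have hM : Integrable M μ := integrable_birkhoffMax hT hφ N
  have hMT : Integrable (fun x => M (T x)) μ := hT.integrable_comp_of_integrable hM
  have hE : MeasurableSet {x | 0 < M x} := measurableSet_lt measurable_const hMm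
  calc 0 = ∫ x, M x ∂μ - ∫ x, M (T x) ∂μ := by
        rw [← integral_map hT.aemeasurable (hT.map_eq ▸ hMm.aestronglyMeasurable), hT.map_eq,
          sub_self]
    _ ≤ ∫ x in {x | 0 < M x}, M x ∂μ - ∫ x in {x | 0 < M x}, M (T x) ∂μ := by
        rw [setIntegral_eq_integral_of_forall_compl_eq_zero (s := {x | 0 < M x}) (f := M)
          fun x hx => le_antisymm (not_lt.1 hx) (birkhoffMax_nonneg N x)]
        exact sub_le_sub_left
          (setIntegral_le_integral hMT (ae_of_all _ fun x => birkhoffMax_nonneg N (T x))) _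
    _ = ∫ x in {x | 0 < M x}, (M x - M (T x)) ∂μ :=
        (integral_sub hM.integrableOn hMT.integrableOn).symm
    _ ≤ ∫ x in {x | 0 < M x}, φ x ∂μ :=
        setIntegral_mono_on (hM.sub hMT).integrableOn hφ.integrableOn hE fun x hx => by
          linarith [birkhoffMax_le_add_birkhoffMax_apply hx]

theorem MeasureTheory.MeasurePreserving.setIntegral_exists_birkhoffSum_pos_nonneg
    (hT : MeasurePreserving T μ μ) (hφm : Measurable φ) (hφ : Integrable φ μ) :
    0 ≤ ∫ x in {x | ∃ n, 0 < birkhoffSum T φ n x}, φ x ∂μ := by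
  rw [← iUnion_setOf_birkhoffMax_pos]
  exact ge_of_tendsto'
    (tendsto_setIntegral_of_monotone
      (fun N => measurableSet_lt measurable_const (measurable_birkhoffMax hT.measurable hφm N))
      (fun _ _ h _ hx => hx.trans_le (monotone_birkhoffMax _ h)) hφ.integrableOn)
    (hT.setIntegral_birkhoffMax_pos_nonneg hφm hφ)

end BirkhoffMax

section Hopf

variable {X : Type*} [MeasurableSpace X] {μ : Measure X} {T : X → X}

lemma ae_forall_iterate_mem_iff (hT : Measure.QuasiMeasurePreserving T μ μ) {B : Set X}
    (hB : T ⁻¹' B =ᵐ[μ] B) : ∀ᵐ x ∂μ, ∀ k, T^[k] x ∈ B ↔ x ∈ B :=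
  ae_all_iff.2 fun k => eventuallyEq_set.1 (hT.preimage_iterate_ae_eq k hB)

theorem MeasureTheory.MeasurePreserving.mul_setIntegral_le_setIntegral
    (hT : MeasurePreserving T μ μ) {f g : X → ℝ} (hfm : Measurable f) (hgm : Measurable g)
    (hf : Integrable f μ) (hg : Integrable g μ) (c : ℝ) {B : Set X} (hB : MeasurableSet B)
    (hBinv : T ⁻¹' B =ᵐ[μ] B)
    (hlt : ∀ x ∈ B, ∃ n, c * birkhoffSum T g n x < birkhoffSum T f n x) :
    c * ∫ x in B, g x ∂μ ≤ ∫ x in B, f x ∂μ := by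
  set φ := B.indicator fun x => f x - c * g x
  have hmax := hT.setIntegral_exists_birkhoffSum_pos_nonneg (φ := φ)
    ((hfm.sub (hgm.const_mul c)).indicator hB) ((hf.sub (hg.const_mul c)).indicator hB)
  have hsum : ∀ n x, birkhoffSum T (fun x => f x - c * g x) n x
      = birkhoffSum T f n x - c * birkhoffSum T g n x := fun n x => by
    simp [birkhoffSum, Finset.mul_sum, Finset.sum_sub_distrib]
  have hE : {x | ∃ n, 0 < birkhoffSum T φ n x} =ᵐ[μ] B := by
    refine eventuallyEq_set.2 ?_
    filter_upwards [ae_forall_iterate_mem_iff hT.quasiMeasurePreserving hBinv] with x hx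
    simp only [φ, birkhoffSum_indicator_of_forall_iterate_mem_iff hx]
    by_cases hxB : x ∈ B
    · simpa [hxB, hsum] using hlt x hxB
    · simp [hxB]
  rw [setIntegral_congr_set hE, setIntegral_indicator hB, inter_self,
    integral_sub hf.integrableOn (hg.const_mul c).integrableOn, integral_const_mul] at hmax
  linarith

theorem MeasureTheory.MeasurePreserving.mul_setLIntegral_le_setLIntegral
    (hT : MeasurePreserving T μ μ) {f g : X → ℝ} (hfm : Measurable f) (hgm : Measurable g)
    (hf : Integrable f μ) (hg : Integrable g μ) (hf0 : 0 ≤ f) (hg0 : 0 ≤ g) (a : ℝ≥0)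
    {B : Set X} (hB : MeasurableSet B) (hBinv : T ⁻¹' B =ᵐ[μ] B)
    (hlt : ∀ x ∈ B, ∃ n, a * birkhoffSum T g n x < birkhoffSum T f n x) :
    a * ∫⁻ x in B, ENNReal.ofReal (g x) ∂μ ≤ ∫⁻ x in B, ENNReal.ofReal (f x) ∂μ := by
  rw [← ofReal_integral_eq_lintegral_ofReal hg.integrableOn (ae_of_all _ hg0),
    ← ofReal_integral_eq_lintegral_ofReal hf.integrableOn (ae_of_all _ hf0),
    ← ENNReal.ofReal_coe_nnreal, ← ENNReal.ofReal_mul a.coe_nonneg]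
  exact ENNReal.ofReal_le_ofReal (hT.mul_setIntegral_le_setIntegral hfm hgm hf hg a hB hBinv hlt)

end Hopf

section Slicing

variable {X : Type*} [MeasurableSpace X]

lemma NNReal.exists_nat_mem_Ioc_mul {ε : ℝ≥0} (hε : 0 < ε) {r : ℝ≥0} (hr : 0 < r) :
    ∃ j : ℕ, r ∈ Ioc (j * ε) ((j + 1) * ε) := by
  have hceil : 0 < ⌈r / ε⌉₊ := Nat.ceil_pos.2 (div_pos hr hε)
  refine ⟨⌈r / ε⌉₊ - 1, ?_, ?_⟩
  · rw [← lt_div_iff₀ hε]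
    exact Nat.lt_ceil.1 (by omega)
  · rw [← div_le_iff₀ hε]
    exact_mod_cast (Nat.le_ceil (r / ε)).trans_eq (by rw [Nat.sub_add_cancel hceil])

lemma lintegral_le_measure_univ_add_of_forall_mul_le {ν ρ : Measure X} {H : X → ℝ≥0∞}
    (hH : Measurable H) (htop : ∀ᵐ x ∂ν, H x ≠ ⊤)
    (h : ∀ (a : ℝ≥0) (b : ℝ≥0∞), a * ν (H ⁻¹' Ioc (a : ℝ≥0∞) b) ≤ ρ (H ⁻¹' Ioc (a : ℝ≥0∞) b))
    {ε : ℝ≥0} (hε : 0 < ε) : ∫⁻ x, H x ∂ν ≤ ρ univ + ε * ν univ := by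
  set e : ℕ → ℝ≥0∞ := fun j => ((j * ε : ℝ≥0) : ℝ≥0∞)
  set S : ℕ → Set X := fun j => H ⁻¹' Ioc (e j) (e (j + 1))
  have hS : ∀ j, MeasurableSet (S j) := fun j => hH measurableSet_Ioc
  have hdisj : Pairwise (Function.onFun Disjoint S) :=
    (Monotone.pairwise_disjoint_on_Ioc_succ (f := e) fun i j hij => by
      simp only [e]; gcongr).mono fun _ _ h => h.preimage H
  have hcover : ∀ᵐ x ∂ν, H x ≤ ∑' j, (S j).indicator (fun _ => e (j + 1)) x := by
    filter_upwards [htop] with x hx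
    rcases eq_or_ne (H x) 0 with h0 | h0
    · simp [h0]
    lift H x to ℝ≥0 using hx with r hr
    obtain ⟨j, hj⟩ := NNReal.exists_nat_mem_Ioc_mul hε (pos_iff_ne_zero.2 (by simpa using h0))
    have hxj : x ∈ S j := by
      simp only [S, e, mem_preimage, ← hr, mem_Ioc, ENNReal.coe_lt_coe, ENNReal.coe_le_coe]
      push_cast
      exact hj
    calc (r : ℝ≥0∞) ≤ e (j + 1) := ENNReal.coe_le_coe.2 (by push_cast; exact hj.2)
      _ = (S j).indicator (fun _ => e (j + 1)) x := (indicator_of_mem hxj (fun _ => _)).symm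
      _ ≤ _ := ENNReal.le_tsum j
  calc ∫⁻ x, H x ∂ν ≤ ∫⁻ x, ∑' j, (S j).indicator (fun _ => e (j + 1)) x ∂ν :=
        lintegral_mono_ae hcover
    _ = ∑' j, e (j + 1) * ν (S j) := by
        rw [lintegral_tsum fun j => (measurable_const.indicator (hS j)).aemeasurable]
        simp_rw [lintegral_indicator_const (hS _)]
    _ ≤ ∑' j, (ρ (S j) + ε * ν (S j)) := ENNReal.tsum_le_tsum fun j => by
        have : e (j + 1) = e j + ε := by simp [e, add_mul]
        rw [this, add_mul]
        gcongr
        exact h _ _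
    _ = ρ (⋃ j, S j) + ε * ν (⋃ j, S j) := by
        rw [ENNReal.tsum_add, ENNReal.tsum_mul_left, measure_iUnion hdisj hS,
          measure_iUnion hdisj hS]
    _ ≤ ρ univ + ε * ν univ := by gcongr <;> exact subset_univ _

theorem lintegral_le_measure_univ_of_forall_mul_le {ν ρ : Measure X} [IsFiniteMeasure ν]
    {H : X → ℝ≥0∞} (hH : Measurable H)
    (h : ∀ (a : ℝ≥0) (b : ℝ≥0∞), a * ν (H ⁻¹' Ioc (a : ℝ≥0∞) b) ≤ ρ (H ⁻¹' Ioc (a : ℝ≥0∞) b)) :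
    ∫⁻ x, H x ∂ν ≤ ρ univ := by
  rcases eq_or_ne (ρ univ) ⊤ with hρ | hρ
  · simp [hρ]
  have htop : ν (H ⁻¹' {⊤}) = 0 := by
    by_contra hne
    obtain ⟨n, hn⟩ := ENNReal.exists_nat_mul_gt hne hρ
    refine (lt_of_le_of_lt ?_ hn).false
    calc (n : ℝ≥0∞) * ν (H ⁻¹' {⊤}) ≤ n * ν (H ⁻¹' Ioc (n : ℝ≥0∞) ⊤) := by
          gcongr
          simp
      _ ≤ ρ (H ⁻¹' Ioc (n : ℝ≥0∞) ⊤) := by simpa using h n ⊤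
      _ ≤ ρ univ := measure_mono (subset_univ _)
  refine ENNReal.le_of_forall_pos_le_add fun δ hδ _ => ?_
  obtain ⟨ε, hε, hεν⟩ := ENNReal.exists_nnreal_pos_mul_lt (measure_ne_top ν univ)
    (ENNReal.coe_ne_zero.2 hδ.ne')
  exact (lintegral_le_measure_univ_add_of_forall_mul_le hH
    (measure_eq_zero_iff_ae_notMem.1 htop) h hε).trans (by gcongr)

end Slicing

section Conservative

variable {X : Type*} [MeasurableSpace X] {μ : Measure X} {T : X → X}

lemma IsConservative.conservative (hT : Measure.QuasiMeasurePreserving T μ μ)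
    (h : IsConservative T μ) : Conservative T μ where
  toQuasiMeasurePreserving := hT
  exists_mem_iterate_mem' s hs hs0 := by
    obtain ⟨n, hn, hpos⟩ := h s hs (pos_iff_ne_zero.2 hs0)
    obtain ⟨x, hxs, hxn⟩ := nonempty_of_measure_ne_zero hpos.ne'
    exact ⟨x, hxs, n, by omega, hxn⟩

theorem MeasureTheory.Conservative.ae_tendsto_birkhoffSum_atTop (hT : Conservative T μ)
    {g : X → ℝ} (hgm : Measurable g) (hg : 0 ≤ g) :
    ∀ᵐ x ∂μ, 0 < g x → Tendsto (fun n => birkhoffSum T g n x) atTop atTop := by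
  have hrec : ∀ᵐ x ∂μ, ∀ m : ℕ, 1 / ((m : ℝ) + 1) < g x →
      ∃ᶠ n in atTop, 1 / ((m : ℝ) + 1) < g (T^[n] x) :=
    ae_all_iff.2 fun m => hT.ae_mem_imp_frequently_image_mem
      (measurableSet_lt measurable_const hgm).nullMeasurableSet
  filter_upwards [hrec] with x hx hgx
  obtain ⟨m, hm⟩ := exists_nat_one_div_lt hgx
  exact tendsto_sum_range_atTop_of_frequently_le (fun n => hg _) Nat.one_div_pos_of_nat
    ((hx m hm).mono fun _ => le_of_lt)

end Conservative

section LimsupRatio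

variable {X : Type*} {T : X → X}

noncomputable def limsupRatio (T : X → X) (f g : X → ℝ) (x : X) : ℝ≥0∞ :=
  limsup (fun n => ENNReal.ofReal (birkhoffSum T f n x / birkhoffSum T g n x)) atTop

lemma limsupRatio_apply_eq_of_tendsto {f g : X → ℝ} (hf : 0 ≤ f) (hg : 0 ≤ g) {x : X}
    (hx : Tendsto (fun n => birkhoffSum T g n (T x)) atTop atTop) :
    limsupRatio T f g (T x) = limsupRatio T f g x := by
  unfold limsupRatio
  rw [eq_comm, ← limsup_nat_add _ 1]
  simp only [birkhoffSum_succ']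
  exact limsup_ofReal_add_div_add (hf x) (hg x) (birkhoffSum_nonneg hf · _) hx

lemma exists_mul_birkhoffSum_lt_of_lt_limsupRatio {f g : X → ℝ} (hg : 0 ≤ g) {a : ℝ≥0}
    {x : X} (h : (a : ℝ≥0∞) < limsupRatio T f g x) :
    ∃ n, a * birkhoffSum T g n x < birkhoffSum T f n x := by
  obtain ⟨n, hn⟩ := (frequently_lt_of_lt_limsup (by isBoundedDefault) h).exists
  rw [ENNReal.coe_lt_ofReal] at hn
  have hpos : 0 < birkhoffSum T g n x := (birkhoffSum_nonneg hg n x).lt_of_ne fun h0 => by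
    rw [← h0, div_zero] at hn
    exact hn.not_ge a.2
  exact ⟨n, (lt_div_iff₀ hpos).1 hn⟩

variable [MeasurableSpace X] {μ : Measure X}

lemma measurable_limsupRatio (hT : Measurable T) {f g : X → ℝ} (hf : Measurable f)
    (hg : Measurable g) : Measurable (limsupRatio T f g) :=
  Measurable.limsup fun n => ENNReal.measurable_ofReal.comp
    ((measurable_birkhoffSum hT hf n).div (measurable_birkhoffSum hT hg n))

theorem MeasureTheory.MeasurePreserving.lintegral_limsupRatio_mul_le
    (hT : MeasurePreserving T μ μ) (hcons : Conservative T μ) {f g : X → ℝ}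
    (hfm : Measurable f) (hgm : Measurable g) (hf : Integrable f μ) (hg : Integrable g μ)
    (hf0 : 0 ≤ f) (hg0 : ∀ x, 0 < g x) {A : Set X} (hA : MeasurableSet A)
    (hAinv : T ⁻¹' A =ᵐ[μ] A) :
    ∫⁻ x in A, limsupRatio T f g x * ENNReal.ofReal (g x) ∂μ
      ≤ ∫⁻ x in A, ENNReal.ofReal (f x) ∂μ := by
  set H := limsupRatio T f g
  have hg0' : 0 ≤ g := fun x => (hg0 x).le
  have hHm : Measurable H := measurable_limsupRatio hT.measurable hfm hgm
  have hHinv : H ∘ T =ᵐ[μ] H := by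
    filter_upwards [hT.quasiMeasurePreserving.ae (hcons.ae_tendsto_birkhoffSum_atTop hgm hg0')]
      with x hx
    exact limsupRatio_apply_eq_of_tendsto hf0 hg0' (hx (hg0 (T x)))
  have hslice : ∀ (a : ℝ≥0) (b : ℝ≥0∞),
      a * ∫⁻ x in H ⁻¹' Ioc (a : ℝ≥0∞) b ∩ A, ENNReal.ofReal (g x) ∂μ
        ≤ ∫⁻ x in H ⁻¹' Ioc (a : ℝ≥0∞) b ∩ A, ENNReal.ofReal (f x) ∂μ := fun a b =>
    hT.mul_setLIntegral_le_setLIntegral hfm hgm hf hg hf0 hg0' a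
      ((hHm measurableSet_Ioc).inter hA) ((hHinv.preimage _).inter hAinv)
      fun x hx => exists_mul_birkhoffSum_lt_of_lt_limsupRatio hg0' hx.1.1
  have : IsFiniteMeasure ((μ.restrict A).withDensity fun x => ENNReal.ofReal (g x)) :=
    isFiniteMeasure_withDensity_ofReal hg.restrict.hasFiniteIntegral
  calc ∫⁻ x in A, H x * ENNReal.ofReal (g x) ∂μ
      = ∫⁻ x, H x ∂(μ.restrict A).withDensity fun x => ENNReal.ofReal (g x) := by
        rw [lintegral_withDensity_eq_lintegral_mul _ (by fun_prop) hHm]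
        simp_rw [Pi.mul_apply, mul_comm]
    _ ≤ (μ.restrict A).withDensity (fun x => ENNReal.ofReal (f x)) univ :=
        lintegral_le_measure_univ_of_forall_mul_le hHm fun a b => by
          simpa only [withDensity_apply _ (hHm measurableSet_Ioc),
            Measure.restrict_restrict (hHm measurableSet_Ioc)] using hslice a b
    _ = ∫⁻ x in A, ENNReal.ofReal (f x) ∂μ := by
        rw [withDensity_apply _ MeasurableSet.univ, Measure.restrict_univ]

end LimsupRatio

lemma birkhoff_eq_birkhoffSum {X : Type*} (T : X → X) (f : X → ℝ) :
    birkhoff T f = birkhoffSum T f :=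
  rfl

theorem integral_limsup_le_general {X : Type*} [MeasurableSpace X] (μ : Measure X)
    (T : X → X) (hT : MeasurePreserving T μ μ) (hcons : IsConservative T μ)
    (f g : X → ℝ) (hf : Integrable f μ) (hg : Integrable g μ)
    (hfpos : ∀ᵐ x ∂μ, 0 < f x) (hgpos : ∀ᵐ x ∂μ, 0 < g x) :
    (∀ A : Set X, MeasurableSet A → T ⁻¹' A = A →
      ∫⁻ x in A,
          erealToENNReal
            (limsup (fun n => ((birkhoff T f n x / birkhoff T g n x : ℝ) : EReal)) atTop)
          * ENNReal.ofReal (g x) ∂μ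
        ≤ ∫⁻ x in A, ENNReal.ofReal (f x) ∂μ) ∧
    ∫⁻ x,
        erealToENNReal
          (limsup (fun n => ((birkhoff T f n x / birkhoff T g n x : ℝ) : EReal)) atTop)
        * ENNReal.ofReal (g x) ∂μ < ⊤ := by
  obtain ⟨f₁, hf₁m, hf₁pos, hff₁⟩ :=
    hf.aemeasurable.exists_ae_eq_range_subset (t := Ioi 0) hfpos nonempty_Ioi
  obtain ⟨g₁, hg₁m, hg₁pos, hgg₁⟩ :=
    hg.aemeasurable.exists_ae_eq_range_subset (t := Ioi 0) hgpos nonempty_Ioi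
  have hintegrand : (fun x => erealToENNReal
        (limsup (fun n => ((birkhoff T f n x / birkhoff T g n x : ℝ) : EReal)) atTop)
        * ENNReal.ofReal (g x)) =ᵐ[μ] fun x => limsupRatio T f₁ g₁ x * ENNReal.ofReal (g₁ x) := by
    filter_upwards [ae_all_iff.2 (hT.quasiMeasurePreserving.birkhoffSum_ae_eq_of_ae_eq hff₁),
      ae_all_iff.2 (hT.quasiMeasurePreserving.birkhoffSum_ae_eq_of_ae_eq hgg₁), hgg₁]
      with x hfx hgx hgx₁
    simp only [erealToENNReal_limsup_coe, birkhoff_eq_birkhoffSum, hfx, hgx, hgx₁, limsupRatio]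
  have hbound : ∀ A : Set X, MeasurableSet A → T ⁻¹' A = A →
      ∫⁻ x in A, limsupRatio T f₁ g₁ x * ENNReal.ofReal (g₁ x) ∂μ
        ≤ ∫⁻ x in A, ENNReal.ofReal (f x) ∂μ := fun A hA hAinv =>
    (hT.lintegral_limsupRatio_mul_le (hcons.conservative hT.quasiMeasurePreserving) hf₁m hg₁m
        (hf.congr hff₁) (hg.congr hgg₁) (fun x => (hf₁pos (mem_range_self x)).le)
        (fun x => hg₁pos (mem_range_self x)) hA (.of_eq hAinv)).trans_eq
      (lintegral_congr_ae (ae_restrict_of_ae (hff₁.fun_comp ENNReal.ofReal).symm))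
  refine ⟨fun A hA hAinv =>
    (lintegral_congr_ae (ae_restrict_of_ae hintegrand)).trans_le (hbound A hA hAinv), ?_⟩
  rw [lintegral_congr_ae hintegrand, ← setLIntegral_univ]
  exact (hbound univ .univ preimage_univ).trans_lt (by simpa using hf.lintegral_lt_top)

/-- For `f, g ∈ L¹` positive a.e.: `∫_A f ≥ ∫_A (limsup Sₙf/Sₙg)·g` for every invariant
set `A`; in particular `(limsup Sₙf/Sₙg)·g` is integrable. -/
theorem integral_limsup_le {X : Type*} [MeasurableSpace X] (μ : Measure X) [SigmaFinite μ]
    (T : X → X) (hT : MeasurePreserving T μ μ) (hcons : IsConservative T μ)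
    (f g : X → ℝ) (hf : Integrable f μ) (hg : Integrable g μ)
    (hfpos : ∀ᵐ x ∂μ, 0 < f x) (hgpos : ∀ᵐ x ∂μ, 0 < g x) :
    (∀ A : Set X, MeasurableSet A → T ⁻¹' A = A →
      ∫⁻ x in A,
          erealToENNReal
            (limsup (fun n => ((birkhoff T f n x / birkhoff T g n x : ℝ) : EReal)) atTop)
          * ENNReal.ofReal (g x) ∂μ
        ≤ ∫⁻ x in A, ENNReal.ofReal (f x) ∂μ) ∧
    ∫⁻ x,
        erealToENNReal
          (limsup (fun n => ((birkhoff T f n x / birkhoff T g n x : ℝ) : EReal)) atTop)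
        * ENNReal.ofReal (g x) ∂μ < ⊤ :=
  integral_limsup_le_general μ T hT hcons f g hf hg hfpos hgpos
end
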